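/- arXiv:1810.13256 — 4 statements merged into one kernel-verified Lean document; each statement's English description precedes it below -/
import Mathlib

section
/- Let σ > 0, h > 0, γ > 0, g_max > 0 be real constants, let α₁ > α₂ ≥ 0 be reals, and fix ᾱ ∈ (0, α₁ − α₂). For each P > 1 set Q(P) = P^{ᾱ/2}·h·γ/(2·g_max) and ξ(P) = γ/Q(P). Then for every ε > 0 there exists P₀ > 1 such that for all P ≥ P₀, for every real g with |g| ≤ g_max and every x₀ ∈ Ω(ξ(P), Q(P)), the probability under z distributed as the Gaussian measure N(0, σ²) on ℝ of the event { z : there exists x' ∈ Ω(ξ(P), Q(P)) with x' ≠ x₀ and |P^{α₁/2}·h·x' − (P^{α₁/2}·h·x₀ + P^{α₂/2}·g + z)| ≤ |P^{α₂/2}·g + z| } is less than ε. (In particular, the minimum-distance decoding error probability for a PAM symbol x₀ observed through y = P^{α₁/2}·h·x₀ + P^{α₂/2}·g + z tends to 0 as P → ∞, uniformly over the transmitted symbol and the bounded interference g.) -/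
/-!
Distinct points of `Ω(ξ, Q)` are at least `ξ` apart, so a minimum-distance decoding error forces
the effective noise `P^{α₂/2}·g + z` to be at least half the received spacing
`P^{α₁/2}·h·ξ = 2·gmax·P^{(α₁-ᾱ)/2}`. Hence `|z| ≥ gmax·(P^{(α₁-ᾱ)/2} - P^{α₂/2})`, a threshold
tending to infinity because `α₂ < α₁ - ᾱ`, and the Gaussian tail beyond it vanishes.
-/

open MeasureTheory ProbabilityTheory Real

/-- The PAM constellation `Ω(ξ, Q) = { ξ·a : a ∈ ℤ, −Q ≤ a ≤ Q }`. -/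
def PAM (ξ Q : ℝ) : Set ℝ :=
  {x | ∃ a : ℤ, x = ξ * a ∧ -Q ≤ (a : ℝ) ∧ (a : ℝ) ≤ Q}

open Filter Topology

lemma tendsto_measure_norm_gt_atTop {E : Type*} [NormedAddCommGroup E] [CompleteSpace E]
    [SecondCountableTopology E] [MeasurableSpace E] [BorelSpace E]
    (μ : Measure E) [IsFiniteMeasure μ] :
    Tendsto (fun r : ℝ ↦ μ {x | r < ‖x‖}) atTop (𝓝 0) := by
  simpa only [iSup_singleton] using
    tendsto_measure_norm_gt_of_isTightMeasureSet (isTightMeasureSet_singleton (μ := μ))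

lemma tendsto_rpow_sub_rpow_atTop {a b : ℝ} (ha : 0 < a) (hab : b < a) :
    Tendsto (fun x : ℝ ↦ x ^ a - x ^ b) atTop atTop := by
  have hfactor : (fun x : ℝ ↦ x ^ a * (1 - x ^ (-(a - b)))) =ᶠ[atTop] fun x ↦ x ^ a - x ^ b := by
    filter_upwards [eventually_gt_atTop 0] with x hx
    rw [mul_sub, mul_one, ← rpow_add hx]
    ring_nf
  refine Tendsto.congr' hfactor ((tendsto_rpow_atTop ha).atTop_mul_pos one_pos ?_)
  simpa using (tendsto_rpow_neg_atTop (sub_pos.mpr hab)).const_sub 1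

lemma PAM.abs_le_abs_sub {ξ Q x y : ℝ} (hx : x ∈ PAM ξ Q) (hy : y ∈ PAM ξ Q) (hne : x ≠ y) :
    |ξ| ≤ |x - y| := by
  obtain ⟨a, rfl, -⟩ := hx
  obtain ⟨b, rfl, -⟩ := hy
  have hab : (1 : ℝ) ≤ |(a : ℝ) - b| := by
    exact_mod_cast Int.one_le_abs (sub_ne_zero.mpr fun h ↦ hne (by rw [h]))
  rw [← mul_sub, abs_mul]
  exact le_mul_of_one_le_right (abs_nonneg ξ) hab

lemma PAM.le_abs_of_decoding_error {ξ Q D c x₀ x' z : ℝ} (hD : 0 ≤ D)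
    (hx₀ : x₀ ∈ PAM ξ Q) (hx' : x' ∈ PAM ξ Q) (hne : x' ≠ x₀)
    (hdec : |D * x' - (D * x₀ + c + z)| ≤ |c + z|) :
    D * |ξ| / 2 - |c| ≤ |z| := by
  have hsep : D * |ξ| ≤ |D * x' - D * x₀| := by
    rw [← mul_sub, abs_mul, abs_of_nonneg hD]
    exact mul_le_mul_of_nonneg_left (abs_le_abs_sub hx' hx₀ hne) hD
  have htri : |D * x' - D * x₀| ≤ |D * x' - (D * x₀ + c + z)| + |c + z| := by
    simpa only [add_assoc, add_sub_cancel_left] using abs_sub_le (D * x') (D * x₀ + c + z) (D * x₀)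
  linarith [abs_add_le c z]

theorem pam_decoding_error_tendsto_zero_general
    (σ h γ gmax α₁ α₂ ᾱ : ℝ)
    (hh : 0 < h) (hγ : 0 < γ) (hgmax : 0 < gmax)
    (hα₂ : 0 ≤ α₂) (hᾱ₁ : ᾱ < α₁ - α₂)
    (Q ξ : ℝ → ℝ)
    (hQ : ∀ P : ℝ, Q P = P ^ (ᾱ / 2) * h * γ / (2 * gmax))
    (hξ : ∀ P : ℝ, ξ P = γ / Q P) :
    ∀ ε > (0 : ℝ), ∃ P₀ > (1 : ℝ), ∀ P ≥ P₀, ∀ g : ℝ, |g| ≤ gmax →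
      ∀ x₀ ∈ PAM (ξ P) (Q P),
        (gaussianReal 0 ⟨σ ^ 2, sq_nonneg σ⟩)
          {z : ℝ | ∃ x' ∈ PAM (ξ P) (Q P), x' ≠ x₀ ∧
            |P ^ (α₁ / 2) * h * x' - (P ^ (α₁ / 2) * h * x₀ + P ^ (α₂ / 2) * g + z)|
              ≤ |P ^ (α₂ / 2) * g + z|}
          < ENNReal.ofReal ε := by
  intro ε hε
  -- instance search does not see through the anonymous-constructor variance
  have := instIsProbabilityMeasureGaussianReal 0 ⟨σ ^ 2, sq_nonneg σ⟩
  obtain ⟨R, hR⟩ := ((tendsto_measure_norm_gt_atTop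
    (gaussianReal 0 ⟨σ ^ 2, sq_nonneg σ⟩)).eventually_lt_const
    (ENNReal.ofReal_pos.mpr hε)).exists
  have hgap := (tendsto_rpow_sub_rpow_atTop (a := (α₁ - ᾱ) / 2) (b := α₂ / 2) (by linarith)
    (by linarith)).const_mul_atTop hgmax
  obtain ⟨P₁, hP₁⟩ := eventually_atTop.mp (hgap.eventually_gt_atTop R)
  refine ⟨max P₁ 2, by simp, fun P hP g hg x₀ hx₀ ↦ (measure_mono ?_).trans_lt hR⟩
  rintro z ⟨x', hx', hne, hdec⟩
  have hP0 : 0 < P := by linarith [le_of_max_le_right hP]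
  have hspacing : P ^ (α₁ / 2) * h * |ξ P| / 2 = gmax * P ^ ((α₁ - ᾱ) / 2) := by
    have : 0 < P ^ (ᾱ / 2) := rpow_pos_of_pos hP0 _
    rw [hξ, hQ, abs_of_pos (by positivity), sub_div, rpow_sub hP0]
    field_simp
  have hc : |P ^ (α₂ / 2) * g| ≤ P ^ (α₂ / 2) * gmax := by
    rw [abs_mul, abs_of_pos (rpow_pos_of_pos hP0 _)]
    exact mul_le_mul_of_nonneg_left hg (rpow_nonneg hP0.le _)
  have hz := PAM.le_abs_of_decoding_error (by positivity) hx₀ hx' hne hdec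
  have hR' := hP₁ P (le_of_max_le_left hP)
  show R < ‖z‖
  rw [Real.norm_eq_abs]
  linarith

/-- For the channel `y = P^{α₁/2}·h·x + P^{α₂/2}·g + z` with bounded interference `g`
and Gaussian noise `z ~ N(0, σ²)`, the minimum-distance decoding error probability
for a PAM symbol vanishes as `P → ∞`, uniformly in the symbol and in `g`. -/
theorem pam_decoding_error_tendsto_zero
    (σ h γ gmax α₁ α₂ ᾱ : ℝ)
    (hσ : 0 < σ) (hh : 0 < h) (hγ : 0 < γ) (hgmax : 0 < gmax)
    (hα₂ : 0 ≤ α₂) (hα : α₂ < α₁) (hᾱ₀ : 0 < ᾱ) (hᾱ₁ : ᾱ < α₁ - α₂)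
    (Q ξ : ℝ → ℝ)
    (hQ : ∀ P : ℝ, Q P = P ^ (ᾱ / 2) * h * γ / (2 * gmax))
    (hξ : ∀ P : ℝ, ξ P = γ / Q P) :
    ∀ ε > (0 : ℝ), ∃ P₀ > (1 : ℝ), ∀ P ≥ P₀, ∀ g : ℝ, |g| ≤ gmax →
      ∀ x₀ ∈ PAM (ξ P) (Q P),
        (gaussianReal 0 ⟨σ ^ 2, sq_nonneg σ⟩)
          {z : ℝ | ∃ x' ∈ PAM (ξ P) (Q P), x' ≠ x₀ ∧
            |P ^ (α₁ / 2) * h * x' - (P ^ (α₁ / 2) * h * x₀ + P ^ (α₂ / 2) * g + z)|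
              ≤ |P ^ (α₂ / 2) * g + z|}
          < ENNReal.ofReal ε :=
  pam_decoding_error_tendsto_zero_general σ h γ gmax α₁ α₂ ᾱ hh hγ hgmax hα₂ hᾱ₁ Q ξ hQ hξ
end

section
/- Fix α with 2/3 < α ≤ 3/4, a constant ε with 0 < ε, a constant γ ∈ (0, 1/(4√2)], and channel coefficients h₁₁, h₁₂, h₂₁, h₂₂ ∈ (1, 2]. For P > 1 let Q_c = P^{(3α−2−ε)/2} and Q_p = P^{(1−α−ε)/2}, and let v₁c, v₂c, u₁, u₂ be independent random variables each uniformly distributed on Ω(2γ/Q_c, Q_c), let v₁p, v₂p be independent random variables uniformly distributed on Ω(γ/Q_p, Q_p), all six mutually independent and independent of z₁ distributed as the Gaussian measure N(0, 1). Define y₁ = √P·h₁₁h₂₂·v₁c + √(P^{1−α})·h₁₁h₂₂·v₁p + √(P^{α})·h₁₂h₁₁·(v₂c + u₁) + √(P^{2α−1})·h₁₂h₂₁·u₂ + h₁₂h₁₁·v₂p + z₁. Then for every η > 0 there exists P₀ such that for all P ≥ P₀ there is a Borel-measurable function f : ℝ → ℝ × ℝ with ℙ[ f(y₁) = (v₁c,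 v₁p) ] > 1 − η. (Successive decoding recovers v₁c and v₁p from y₁ with error probability tending to 0 as P → ∞.) -/
/-!
After scaling, the channel output is a superposition `w₁a + w₂s + w₃t + w₄b + e` of four
integer lattice layers (`a` from `v₁c`, `s` from `v₂c + u₁`, `t` from `u₂`, `b` from `v₁p`)
plus the term `e = h₁₂h₁₁v₂p + z₁`, where `w₁, …, w₄` are of order
`P^((3-3α+ε)/2)`, `P^((2-2α+ε)/2)`, `P^((1-α+ε)/2)`, `P^(ε/2)`, and the layers below `w_k` have
total amplitude of order `P^(α/2)`, `P^((2α-1)/2)`, `P^((1-α)/2)`, `1`. The conditions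
`2/3 < α ≤ 3/4` make each spacing exceed the amplitude beneath it by a factor `P^(ε/2)`. Hence,
once `|z₁| ≤ T` and `P` is large, rounding to `w₁ℤ` and subtracting, three times in turn,
recovers every layer exactly, so the error probability is at most the Gaussian tail
`ℙ(|z₁| > T)`.
-/

open MeasureTheory ProbabilityTheory Real

open Filter

theorem measurableSet_PAM (ξ Q : ℝ) : MeasurableSet (PAM ξ Q) :=
  ((Set.countable_range fun a : ℤ => ξ * a).mono
    fun _ hx => hx.imp fun _ ha => ha.1.symm).measurableSet

theorem abs_le_of_mem_PAM_div {β Q x : ℝ} (hβ : 0 ≤ β) (hQ : 0 < Q) (hx : x ∈ PAM (β / Q) Q) :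
    |x| ≤ β := by
  obtain ⟨a, rfl, ha₁, ha₂⟩ := hx
  rw [abs_mul, abs_of_nonneg (by positivity)]
  calc β / Q * |(a : ℝ)| ≤ β / Q * Q := by gcongr; exact abs_le.2 ⟨ha₁, ha₂⟩
    _ = β := div_mul_cancel₀ β hQ.ne'

theorem ae_mem_of_map_eq_uniformOn {Ω α : Type*} [MeasurableSpace Ω] [MeasurableSpace α]
    {μ : Measure Ω} {X : Ω → α} {s : Set α} (hX : AEMeasurable X μ) (hs : MeasurableSet s)
    (h : μ.map X = uniformOn s) : ∀ᵐ ω ∂μ, X ω ∈ s :=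
  ae_of_ae_map hX (h ▸ ae_cond_mem hs)

theorem exists_measure_abs_gt_lt (ν : Measure ℝ) [IsFiniteMeasure ν] {δ : ENNReal} (hδ : 0 < δ) :
    ∃ T, 0 ≤ T ∧ ν {x | T < |x|} < δ := by
  have h := tendsto_measure_compl_closedBall_of_isTightMeasureSet
    (isTightMeasureSet_singleton (μ := ν)) 0
  simp only [Set.mem_singleton_iff, iSup_iSup_eq_left] at h
  obtain ⟨T, hT, hδT⟩ := ((eventually_ge_atTop 0).and (h.eventually_lt_const hδ)).exists
  refine ⟨T, hT, ?_⟩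
  convert hδT using 2
  ext x
  simp

theorem ofReal_one_sub_lt_measure {Ω : Type*} [MeasurableSpace Ω] {μ : Measure Ω}
    [IsProbabilityMeasure μ] {η : ℝ} {B S : Set Ω} (hS : ∀ᵐ ω ∂μ, ω ∉ B → ω ∈ S)
    (hB : μ B < min (ENNReal.ofReal η) 1) : ENNReal.ofReal (1 - η) < μ S := by
  have hη : 0 ≤ η :=
    (ENNReal.ofReal_pos.1 ((zero_le.trans_lt hB).trans_le (min_le_left _ _))).le
  have hBc : 1 - μ B ≤ μ Bᶜ := by
    rw [tsub_le_iff_left, ← measure_univ (μ := μ), ← Set.union_compl_self B]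
    exact measure_union_le _ _
  have hSc : μ Bᶜ ≤ μ S := measure_mono_ae hS
  calc ENNReal.ofReal (1 - η) = 1 - ENNReal.ofReal η := by
        rw [ENNReal.ofReal_sub _ hη, ENNReal.ofReal_one]
    _ ≤ 1 - min (ENNReal.ofReal η) 1 := tsub_le_tsub_left (min_le_left _ _) _
    _ < 1 - μ B := ENNReal.sub_lt_of_sub_lt (min_le_right _ _) (.inl ENNReal.one_ne_top)
        (by rwa [ENNReal.sub_sub_cancel ENNReal.one_ne_top prob_le_one])
    _ ≤ μ S := hBc.trans hSc

noncomputable def latticeResidual (w y : ℝ) : ℝ := y - w * round (y / w)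

theorem round_mul_add_div {w r : ℝ} (a : ℤ) (hr : |r| < w / 2) :
    round ((w * a + r) / w) = a := by
  have hw : 0 < w := by linarith [abs_nonneg r]
  rw [show (w * a + r) / w = r / w + a by field_simp; ring, round_add_intCast,
    add_eq_right, round_eq_zero_iff, Set.mem_Ico, le_div_iff₀ hw, div_lt_iff₀ hw]
  constructor <;> linarith [abs_lt.1 hr]

theorem latticeResidual_mul_add {w r : ℝ} (a : ℤ) (hr : |r| < w / 2) :
    latticeResidual w (w * a + r) = r := by
  rw [latticeResidual, round_mul_add_div a hr]
  ring

theorem measurable_intCast_round : Measurable fun x : ℝ => ((round x : ℤ) : ℝ) := by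
  rw [show (round : ℝ → ℤ) = fun x => ⌊x + 1 / 2⌋ from funext round_eq]
  exact measurable_from_top.comp (measurable_id.add_const _).floor

theorem measurable_latticeResidual (w : ℝ) : Measurable (latticeResidual w) :=
  measurable_id.sub ((measurable_intCast_round.comp (measurable_id.div_const w)).const_mul w)

noncomputable def successiveDecoder (w₁ w₂ w₃ w₄ ξ₁ ξ₄ : ℝ) (y : ℝ) : ℝ × ℝ :=
  (ξ₁ * round (y / w₁),
    ξ₄ * round (latticeResidual w₃ (latticeResidual w₂ (latticeResidual w₁ y)) / w₄))

theorem measurable_successiveDecoder (w₁ w₂ w₃ w₄ ξ₁ ξ₄ : ℝ) :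
    Measurable (successiveDecoder w₁ w₂ w₃ w₄ ξ₁ ξ₄) :=
  ((measurable_intCast_round.comp (measurable_id.div_const w₁)).const_mul ξ₁).prodMk
    ((measurable_intCast_round.comp (((measurable_latticeResidual w₃).comp
      ((measurable_latticeResidual w₂).comp (measurable_latticeResidual w₁))).div_const
        w₄)).const_mul ξ₄)

theorem successiveDecoder_apply (ξ₁ ξ₄ : ℝ) {w₁ w₂ w₃ w₄ e : ℝ} {a s t b : ℤ}
    (h₁ : |w₂ * s + (w₃ * t + (w₄ * b + e))| < w₁ / 2)
    (h₂ : |w₃ * t + (w₄ * b + e)| < w₂ / 2) (h₃ : |w₄ * b + e| < w₃ / 2) (h₄ : |e| < w₄ / 2) :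
    successiveDecoder w₁ w₂ w₃ w₄ ξ₁ ξ₄ (w₁ * a + (w₂ * s + (w₃ * t + (w₄ * b + e)))) =
      (ξ₁ * a, ξ₄ * b) := by
  simp only [successiveDecoder, round_mul_add_div a h₁, latticeResidual_mul_add a h₁,
    latticeResidual_mul_add s h₂, latticeResidual_mul_add t h₃, round_mul_add_div b h₄]

theorem abs_add_le_two_mul_rpow {P x y c T u r : ℝ} (hP : 1 ≤ P) (hxy : x ≤ y) (hc : 0 ≤ c)
    (hu : |u| ≤ c * P ^ y) (hr : |r| ≤ c * P ^ x + T) : |u + r| ≤ 2 * c * P ^ y + T := by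
  have := mul_le_mul_of_nonneg_left (rpow_le_rpow_of_exponent_le hP hxy) hc
  linarith [abs_add_le u r]

theorem abs_lt_half_of_le_rpow {P x δ c C d T r w : ℝ} (hP : 1 ≤ P) (hx : 0 ≤ x) (hT : 0 ≤ T)
    (hcC : c ≤ C) (hK : 2 * (C + T) < d * P ^ δ) (hr : |r| ≤ c * P ^ x + T)
    (hw : d * P ^ (x + δ) ≤ w) : |r| < w / 2 := by
  have hPx : 1 ≤ P ^ x := one_le_rpow hP hx
  have : 2 * (C + T) * P ^ x < d * P ^ (x + δ) := by
    rw [rpow_add (by linarith), mul_comm (P ^ x), ← mul_assoc]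
    exact mul_lt_mul_of_pos_right hK (by linarith)
  have : c * P ^ x ≤ C * P ^ x := mul_le_mul_of_nonneg_right hcC (by linarith)
  have : T ≤ T * P ^ x := le_mul_of_one_le_right hT hPx
  linarith

theorem abs_residuals_lt {P δ γ T x₁ x₂ x₃ w₁ w₂ w₃ w₄ u₂ u₃ u₄ e : ℝ}
    (hP : 1 ≤ P) (hT : 0 ≤ T) (hγ : 0 ≤ γ) (hK : 2 * (32 * γ + T) < γ * P ^ δ)
    (hx₃ : 0 ≤ x₃) (hx₂₃ : x₃ ≤ x₂) (hx₁₂ : x₂ ≤ x₁)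
    (hw₁ : γ * P ^ (x₁ + δ) ≤ w₁) (hw₂ : γ * P ^ (x₂ + δ) ≤ w₂) (hw₃ : γ * P ^ (x₃ + δ) ≤ w₃)
    (hw₄ : γ * P ^ δ ≤ w₄) (hu₂ : |u₂| ≤ 16 * γ * P ^ x₁) (hu₃ : |u₃| ≤ 8 * γ * P ^ x₂)
    (hu₄ : |u₄| ≤ 4 * γ * P ^ x₃) (he : |e| ≤ 4 * γ + T) :
    |u₂ + (u₃ + (u₄ + e))| < w₁ / 2 ∧ |u₃ + (u₄ + e)| < w₂ / 2 ∧ |u₄ + e| < w₃ / 2 ∧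
      |e| < w₄ / 2 := by
  -- The amplitudes halve from each layer to the next, so every residual is at most twice the
  -- amplitude of its top layer.
  have r₄ : |e| ≤ 4 * γ * P ^ (0 : ℝ) + T := by rwa [rpow_zero, mul_one]
  have r₃ : |u₄ + e| ≤ 8 * γ * P ^ x₃ + T :=
    (abs_add_le_two_mul_rpow hP hx₃ (by positivity) hu₄ r₄).trans_eq (by ring)
  have r₂ : |u₃ + (u₄ + e)| ≤ 16 * γ * P ^ x₂ + T :=
    (abs_add_le_two_mul_rpow hP hx₂₃ (by positivity) hu₃ r₃).trans_eq (by ring)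
  have r₁ : |u₂ + (u₃ + (u₄ + e))| ≤ 32 * γ * P ^ x₁ + T :=
    (abs_add_le_two_mul_rpow hP hx₁₂ (by positivity) hu₂ r₂).trans_eq (by ring)
  refine ⟨abs_lt_half_of_le_rpow hP (hx₃.trans (hx₂₃.trans hx₁₂)) hT le_rfl hK r₁ hw₁,
    abs_lt_half_of_le_rpow hP (hx₃.trans hx₂₃) hT (by linarith) hK r₂ hw₂,
    abs_lt_half_of_le_rpow hP hx₃ hT (by linarith) hK r₃ hw₃,
    abs_lt_half_of_le_rpow hP le_rfl hT (by linarith) hK r₄ (by rwa [zero_add])⟩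

theorem sqrt_rpow {P : ℝ} (hP : 0 ≤ P) (x : ℝ) : √(P ^ x) = P ^ (x / 2) := by
  rw [sqrt_eq_rpow, ← rpow_mul hP]
  ring_nf

theorem rpow_le_sqrt_rpow_mul_div {P x c y h κ γ : ℝ} (hP : 1 ≤ P) (hh : 1 ≤ h) (hγ : 0 ≤ γ)
    (hγκ : γ ≤ κ) (hy : y ≤ x / 2 - c) : γ * P ^ y ≤ √(P ^ x) * h * (κ / P ^ c) := by
  have hP0 : 0 < P := by linarith
  rw [sqrt_rpow hP0.le]
  calc γ * P ^ y ≤ 1 * κ * P ^ (x / 2 - c) := by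
        rw [one_mul]; exact mul_le_mul hγκ (rpow_le_rpow_of_exponent_le hP hy) (by positivity)
          (hγ.trans hγκ)
    _ ≤ h * κ * P ^ (x / 2 - c) := by gcongr; linarith
    _ = _ := by rw [rpow_sub hP0]; ring

theorem abs_mul_le_of_le_four {h v β : ℝ} (h0 : 0 ≤ h) (h4 : h ≤ 4) (hv : |v| ≤ β) :
    |h * v| ≤ 4 * β := by
  rw [abs_mul, abs_of_nonneg h0]
  exact mul_le_mul h4 hv (abs_nonneg v) (by norm_num)

theorem abs_sqrt_rpow_mul_mul_le {P x h ξ s β : ℝ} (hP : 0 ≤ P) (h0 : 0 ≤ h) (h4 : h ≤ 4)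
    (hs : |ξ * s| ≤ β) : |√(P ^ x) * h * ξ * s| ≤ 4 * β * P ^ (x / 2) := by
  rw [mul_assoc, mul_assoc, abs_mul, abs_of_nonneg (sqrt_nonneg _), sqrt_rpow hP, mul_comm]
  exact mul_le_mul_of_nonneg_right (abs_mul_le_of_le_four h0 h4 hs) (by positivity)

theorem mul_mem_Icc_one_four {h h' : ℝ} (hh : h ∈ Set.Ioc (1 : ℝ) 2)
    (hh' : h' ∈ Set.Ioc (1 : ℝ) 2) :
    h * h' ∈ Set.Icc (1 : ℝ) 4 := by
  obtain ⟨h₁, h₂⟩ := hh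
  obtain ⟨h₁', h₂'⟩ := hh'
  constructor <;> nlinarith

theorem layer_spacings_ge {α ε γ A B C P : ℝ} (hα : α ≤ 3 / 4) (hγ : 0 ≤ γ)
    (hA : 1 ≤ A) (hB : 1 ≤ B) (hC : 1 ≤ C) (hP : 1 ≤ P) :
    γ * P ^ (α / 2 + ε / 2) ≤ √P * A * (2 * γ / P ^ ((3 * α - 2 - ε) / 2)) ∧
    γ * P ^ ((2 * α - 1) / 2 + ε / 2) ≤ √(P ^ α) * B * (2 * γ / P ^ ((3 * α - 2 - ε) / 2)) ∧
    γ * P ^ ((1 - α) / 2 + ε / 2) ≤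
      √(P ^ (2 * α - 1)) * C * (2 * γ / P ^ ((3 * α - 2 - ε) / 2)) ∧
    γ * P ^ (ε / 2) ≤ √(P ^ (1 - α)) * A * (γ / P ^ ((1 - α - ε) / 2)) := by
  refine ⟨?_, rpow_le_sqrt_rpow_mul_div hP hB hγ (by linarith) (by linarith),
    rpow_le_sqrt_rpow_mul_div hP hC hγ (by linarith) (by linarith),
    rpow_le_sqrt_rpow_mul_div hP hA hγ le_rfl (by linarith)⟩
  simpa only [rpow_one] using
    rpow_le_sqrt_rpow_mul_div (x := 1) hP hA hγ (by linarith : γ ≤ 2 * γ) (by linarith)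

theorem exists_decoder_of_abs_noise_le {α ε γ h₁₁ h₁₂ h₂₁ h₂₂ P T : ℝ}
    (hα₁ : 2 / 3 < α) (hα₂ : α ≤ 3 / 4) (hγ : 0 < γ)
    (hh₁₁ : h₁₁ ∈ Set.Ioc (1 : ℝ) 2) (hh₁₂ : h₁₂ ∈ Set.Ioc (1 : ℝ) 2)
    (hh₂₁ : h₂₁ ∈ Set.Ioc (1 : ℝ) 2) (hh₂₂ : h₂₂ ∈ Set.Ioc (1 : ℝ) 2)
    (hP : 1 ≤ P) (hT : 0 ≤ T) (hK : 2 * (32 * γ + T) < γ * P ^ (ε / 2)) :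
    ∃ f : ℝ → ℝ × ℝ, Measurable f ∧ ∀ v₁c v₂c u₁ u₂ v₁p v₂p z : ℝ,
      v₁c ∈ PAM (2 * γ / P ^ ((3 * α - 2 - ε) / 2)) (P ^ ((3 * α - 2 - ε) / 2)) →
      v₂c ∈ PAM (2 * γ / P ^ ((3 * α - 2 - ε) / 2)) (P ^ ((3 * α - 2 - ε) / 2)) →
      u₁ ∈ PAM (2 * γ / P ^ ((3 * α - 2 - ε) / 2)) (P ^ ((3 * α - 2 - ε) / 2)) →
      u₂ ∈ PAM (2 * γ / P ^ ((3 * α - 2 - ε) / 2)) (P ^ ((3 * α - 2 - ε) / 2)) →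
      v₁p ∈ PAM (γ / P ^ ((1 - α - ε) / 2)) (P ^ ((1 - α - ε) / 2)) →
      v₂p ∈ PAM (γ / P ^ ((1 - α - ε) / 2)) (P ^ ((1 - α - ε) / 2)) → |z| ≤ T →
      f (√P * (h₁₁ * h₂₂) * v₁c + √(P ^ (1 - α)) * (h₁₁ * h₂₂) * v₁p
          + √(P ^ α) * (h₁₂ * h₁₁) * (v₂c + u₁) + √(P ^ (2 * α - 1)) * (h₁₂ * h₂₁) * u₂
          + (h₁₂ * h₁₁) * v₂p + z) = (v₁c, v₁p) := by
  set Qc := P ^ ((3 * α - 2 - ε) / 2)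
  set Qp := P ^ ((1 - α - ε) / 2)
  have hP0 : 0 < P := by linarith
  have hQc : 0 < Qc := rpow_pos_of_pos hP0 _
  have hQp : 0 < Qp := rpow_pos_of_pos hP0 _
  obtain ⟨hA₁, hA₄⟩ := mul_mem_Icc_one_four hh₁₁ hh₂₂
  obtain ⟨hB₁, hB₄⟩ := mul_mem_Icc_one_four hh₁₂ hh₁₁
  obtain ⟨hC₁, hC₄⟩ := mul_mem_Icc_one_four hh₁₂ hh₂₁
  obtain ⟨hw₁, hw₂, hw₃, hw₄⟩ := layer_spacings_ge (ε := ε) hα₂ hγ.le hA₁ hB₁ hC₁ hP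
  refine ⟨successiveDecoder (√P * (h₁₁ * h₂₂) * (2 * γ / Qc))
    (√(P ^ α) * (h₁₂ * h₁₁) * (2 * γ / Qc)) (√(P ^ (2 * α - 1)) * (h₁₂ * h₂₁) * (2 * γ / Qc))
    (√(P ^ (1 - α)) * (h₁₁ * h₂₂) * (γ / Qp)) (2 * γ / Qc) (γ / Qp),
    measurable_successiveDecoder _ _ _ _ _ _, ?_⟩
  intro v₁c v₂c u₁ u₂ v₁p v₂p z h₁c h₂c hu₁ hu₂ h₁p h₂p hz
  have b₂c := abs_le_of_mem_PAM_div (by positivity) hQc h₂c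
  have b₁ := abs_le_of_mem_PAM_div (by positivity) hQc hu₁
  have b₂ := abs_le_of_mem_PAM_div (by positivity) hQc hu₂
  have b₁p := abs_le_of_mem_PAM_div hγ.le hQp h₁p
  have b₂p := abs_le_of_mem_PAM_div hγ.le hQp h₂p
  obtain ⟨a, rfl, -⟩ := h₁c
  obtain ⟨a₂, rfl, -⟩ := h₂c
  obtain ⟨a₃, rfl, -⟩ := hu₁
  obtain ⟨t, rfl, -⟩ := hu₂
  obtain ⟨b, rfl, -⟩ := h₁p
  have hs : |2 * γ / Qc * ((a₂ + a₃ : ℤ) : ℝ)| ≤ 4 * γ := by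
    rw [Int.cast_add, mul_add]
    linarith [abs_add_le (2 * γ / Qc * a₂) (2 * γ / Qc * a₃)]
  have amp₂ := abs_sqrt_rpow_mul_mul_le (x := α) hP0.le (by linarith) hB₄ hs
  have amp₃ := abs_sqrt_rpow_mul_mul_le (x := 2 * α - 1) hP0.le (by linarith) hC₄ b₂
  have amp₄ := abs_sqrt_rpow_mul_mul_le (x := 1 - α) hP0.le (by linarith) hA₄ b₁p
  have noise : |h₁₂ * h₁₁ * v₂p + z| ≤ 4 * γ + T :=
    (abs_add_le _ _).trans (add_le_add (abs_mul_le_of_le_four (by linarith) hB₄ b₂p) hz)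
  obtain ⟨k₁, k₂, k₃, k₄⟩ := abs_residuals_lt hP hT hγ.le hK (by linarith) (by linarith)
    (by linarith) hw₁ hw₂ hw₃ hw₄ (amp₂.trans_eq (by ring)) (amp₃.trans_eq (by ring)) amp₄ noise
  convert successiveDecoder_apply (2 * γ / Qc) (γ / Qp) k₁ k₂ k₃ k₄ using 2
  push_cast
  ring

theorem successive_decoding_regime_two_thirds_three_fourths_general
    (α ε γ h₁₁ h₁₂ h₂₁ h₂₂ : ℝ)
    (hα₁ : 2 / 3 < α) (hα₂ : α ≤ 3 / 4) (hε : 0 < ε)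
    (hγ₁ : 0 < γ)
    (hh₁₁ : h₁₁ ∈ Set.Ioc (1 : ℝ) 2) (hh₁₂ : h₁₂ ∈ Set.Ioc (1 : ℝ) 2)
    (hh₂₁ : h₂₁ ∈ Set.Ioc (1 : ℝ) 2) (hh₂₂ : h₂₂ ∈ Set.Ioc (1 : ℝ) 2) :
    ∀ η > (0 : ℝ), ∃ P₀ > (1 : ℝ), ∀ P ≥ P₀,
      ∀ (Ω : Type) (_ : MeasurableSpace Ω) (μ : Measure Ω) (_ : IsProbabilityMeasure μ)
        (v₁c v₂c u₁ u₂ v₁p v₂p z₁ : Ω → ℝ),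
        Measurable v₁c → Measurable v₂c → Measurable u₁ → Measurable u₂ →
        Measurable v₁p → Measurable v₂p → Measurable z₁ →
        Measure.map v₁c μ
          = uniformOn (PAM (2 * γ / P ^ ((3 * α - 2 - ε) / 2)) (P ^ ((3 * α - 2 - ε) / 2))) →
        Measure.map v₂c μ
          = uniformOn (PAM (2 * γ / P ^ ((3 * α - 2 - ε) / 2)) (P ^ ((3 * α - 2 - ε) / 2))) →
        Measure.map u₁ μ
          = uniformOn (PAM (2 * γ / P ^ ((3 * α - 2 - ε) / 2)) (P ^ ((3 * α - 2 - ε) / 2))) →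
        Measure.map u₂ μ
          = uniformOn (PAM (2 * γ / P ^ ((3 * α - 2 - ε) / 2)) (P ^ ((3 * α - 2 - ε) / 2))) →
        Measure.map v₁p μ
          = uniformOn (PAM (γ / P ^ ((1 - α - ε) / 2)) (P ^ ((1 - α - ε) / 2))) →
        Measure.map v₂p μ
          = uniformOn (PAM (γ / P ^ ((1 - α - ε) / 2)) (P ^ ((1 - α - ε) / 2))) →
        Measure.map z₁ μ = gaussianReal 0 1 →
        iIndepFun
          ![v₁c, v₂c, u₁, u₂, v₁p, v₂p, z₁] μ →
        ∃ f : ℝ → ℝ × ℝ, Measurable f ∧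
          μ {ω | f (Real.sqrt P * (h₁₁ * h₂₂) * v₁c ω
                    + Real.sqrt (P ^ (1 - α)) * (h₁₁ * h₂₂) * v₁p ω
                    + Real.sqrt (P ^ α) * (h₁₂ * h₁₁) * (v₂c ω + u₁ ω)
                    + Real.sqrt (P ^ (2 * α - 1)) * (h₁₂ * h₂₁) * u₂ ω
                    + (h₁₂ * h₁₁) * v₂p ω + z₁ ω)
                  = (v₁c ω, v₁p ω)}
            > ENNReal.ofReal (1 - η) := by
  intro η hη
  obtain ⟨T, hT, htail⟩ := exists_measure_abs_gt_lt (gaussianReal 0 1)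
    (lt_min (ENNReal.ofReal_pos.2 hη) one_pos)
  obtain ⟨P₁, hP₁⟩ := eventually_atTop.1 ((tendsto_rpow_atTop (half_pos hε)).eventually_gt_atTop
    (2 * (32 * γ + T) / γ))
  refine ⟨max P₁ 2, lt_max_of_lt_right one_lt_two, fun P hP => ?_⟩
  have hK := (div_lt_iff₀' hγ₁).1 (hP₁ P (le_of_max_le_left hP))
  obtain ⟨f, hf, hdecode⟩ := exists_decoder_of_abs_noise_le hα₁ hα₂ hγ₁ hh₁₁ hh₁₂ hh₂₁ hh₂₂
    (by linarith [le_of_max_le_right hP]) hT hK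
  intro Ω _ μ _ v₁c v₂c u₁ u₂ v₁p v₂p z₁ m₁ m₂ m₃ m₄ m₅ m₆ m₇ d₁ d₂ d₃ d₄ d₅ d₆ d₇ _
  refine ⟨f, hf, ofReal_one_sub_lt_measure (B := z₁ ⁻¹' {x | T < |x|}) ?_ ?_⟩
  · filter_upwards [ae_mem_of_map_eq_uniformOn m₁.aemeasurable (measurableSet_PAM _ _) d₁,
      ae_mem_of_map_eq_uniformOn m₂.aemeasurable (measurableSet_PAM _ _) d₂,
      ae_mem_of_map_eq_uniformOn m₃.aemeasurable (measurableSet_PAM _ _) d₃,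
      ae_mem_of_map_eq_uniformOn m₄.aemeasurable (measurableSet_PAM _ _) d₄,
      ae_mem_of_map_eq_uniformOn m₅.aemeasurable (measurableSet_PAM _ _) d₅,
      ae_mem_of_map_eq_uniformOn m₆.aemeasurable (measurableSet_PAM _ _) d₆]
      with ω h₁ h₂ h₃ h₄ h₅ h₆ hz
    exact hdecode _ _ _ _ _ _ _ h₁ h₂ h₃ h₄ h₅ h₆ (not_lt.1 hz)
  · rwa [← Measure.map_apply m₇ (measurableSet_lt measurable_const measurable_abs), d₇]

/-- In the regime `2/3 < α ≤ 3/4`, successive decoding recovers `(v₁c, v₁p)` from the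
channel output `y₁` with error probability tending to `0` as `P → ∞`. -/
theorem successive_decoding_regime_two_thirds_three_fourths
    (α ε γ h₁₁ h₁₂ h₂₁ h₂₂ : ℝ)
    (hα₁ : 2 / 3 < α) (hα₂ : α ≤ 3 / 4) (hε : 0 < ε)
    (hγ₁ : 0 < γ) (hγ₂ : γ ≤ 1 / (4 * Real.sqrt 2))
    (hh₁₁ : h₁₁ ∈ Set.Ioc (1 : ℝ) 2) (hh₁₂ : h₁₂ ∈ Set.Ioc (1 : ℝ) 2)
    (hh₂₁ : h₂₁ ∈ Set.Ioc (1 : ℝ) 2) (hh₂₂ : h₂₂ ∈ Set.Ioc (1 : ℝ) 2) :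
    ∀ η > (0 : ℝ), ∃ P₀ > (1 : ℝ), ∀ P ≥ P₀,
      ∀ (Ω : Type) (_ : MeasurableSpace Ω) (μ : Measure Ω) (_ : IsProbabilityMeasure μ)
        (v₁c v₂c u₁ u₂ v₁p v₂p z₁ : Ω → ℝ),
        Measurable v₁c → Measurable v₂c → Measurable u₁ → Measurable u₂ →
        Measurable v₁p → Measurable v₂p → Measurable z₁ →
        Measure.map v₁c μ
          = uniformOn (PAM (2 * γ / P ^ ((3 * α - 2 - ε) / 2)) (P ^ ((3 * α - 2 - ε) / 2))) →
        Measure.map v₂c μ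
          = uniformOn (PAM (2 * γ / P ^ ((3 * α - 2 - ε) / 2)) (P ^ ((3 * α - 2 - ε) / 2))) →
        Measure.map u₁ μ
          = uniformOn (PAM (2 * γ / P ^ ((3 * α - 2 - ε) / 2)) (P ^ ((3 * α - 2 - ε) / 2))) →
        Measure.map u₂ μ
          = uniformOn (PAM (2 * γ / P ^ ((3 * α - 2 - ε) / 2)) (P ^ ((3 * α - 2 - ε) / 2))) →
        Measure.map v₁p μ
          = uniformOn (PAM (γ / P ^ ((1 - α - ε) / 2)) (P ^ ((1 - α - ε) / 2))) →
        Measure.map v₂p μ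
          = uniformOn (PAM (γ / P ^ ((1 - α - ε) / 2)) (P ^ ((1 - α - ε) / 2))) →
        Measure.map z₁ μ = gaussianReal 0 1 →
        iIndepFun
          ![v₁c, v₂c, u₁, u₂, v₁p, v₂p, z₁] μ →
        ∃ f : ℝ → ℝ × ℝ, Measurable f ∧
          μ {ω | f (Real.sqrt P * (h₁₁ * h₂₂) * v₁c ω
                    + Real.sqrt (P ^ (1 - α)) * (h₁₁ * h₂₂) * v₁p ω
                    + Real.sqrt (P ^ α) * (h₁₂ * h₁₁) * (v₂c ω + u₁ ω)
                    + Real.sqrt (P ^ (2 * α - 1)) * (h₁₂ * h₂₁) * u₂ ω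
                    + (h₁₂ * h₁₁) * v₂p ω + z₁ ω)
                  = (v₁c ω, v₁p ω)}
            > ENNReal.ofReal (1 - η) :=
  successive_decoding_regime_two_thirds_three_fourths_general α ε γ h₁₁ h₁₂ h₂₁ h₂₂ hα₁ hα₂ hε hγ₁
    hh₁₁ hh₁₂ hh₂₁ hh₂₂
end

section
/- Let α ∈ [3/4, 1], δ ∈ (0, 1], ε > 0, and let P ≥ 1 be a real number such that A₁ := P^{(1−α)/2} and A₂ := P^{1−α} are positive integers. Set Q_max = P^{(α/3−ε)/2} and β = δ·P^{−(8α/3−2)/2}. Define B ⊆ (1,4]³ as the set of triples (g₀, g₁, g₂) ∈ (1,4]³ for which there exist integers q₀, q₁, q₂, not all zero, with |q₀| ≤ 2Q_max, |q₁| ≤ 4Q_max, |q₂| ≤ 2Q_max and |g₀q₀ + A₁g₁q₁ + A₂g₂q₂| < β. Then the three-dimensional Lebesgue measure of B is at most 129024·δ·P^{−ε/2}. -/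
/-!
Split the outage set according to whether `q₂ ≠ 0` or `q₂ = 0`. Once all coefficients but the last
nonzero one are fixed, the condition becomes one-dimensional, and for every `c` the set of
`z ∈ (1, 4]` with `|c + a z q| < b` for some integer `q ≠ 0` has measure `O(b / a)`: only the
`O(1 + |c| / a)` values `|q| ≈ |c| / (a z)` contribute, each through an interval of length
`2b / (a |q|)`. By Fubini, each of the `O(Q²)` slabs with fixed `(q₀, q₁) ≠ 0` has measure
`O(β / A₂)`, each of the `O(Q)` slabs with fixed `q₀ ≠ 0` and `q₂ = 0` has measure `O(β / A₁)`,
and the other sign patterns are empty because `β ≤ 1 < gᵢ Aᵢ`. Finally `Q² β / A₂ = δ P^(-ε)`,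
while `Q β / A₂` and, for `α ≥ 3/4`, `Q β / A₁` are at most `δ P^(-ε/2)`.
-/

open MeasureTheory Real

lemma volume_setOf_abs_mul_sub_lt {a : ℝ} (ha : 0 < a) (s b : ℝ) :
    volume {z : ℝ | |a * z - s| < b} = ENNReal.ofReal (2 * b / a) := by
  have : {z : ℝ | |a * z - s| < b} = Metric.ball (s / a) (b / a) := by
    ext z
    rw [Set.mem_ofPred_eq, Metric.mem_ball, Real.dist_eq, lt_div_iff₀ ha,
      show a * z - s = (z - s / a) * a by field_simp, abs_mul, abs_of_pos ha]
  rw [this, Real.volume_ball, mul_div_assoc]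

lemma card_Ioo_floor_ceil_le {m U : ℝ} (hU : U ≤ 4 * m + 2) :
    (Finset.Ioo ⌊m⌋₊ ⌈U⌉₊).card ≤ 5 * (⌊m⌋₊ + 1) := by
  have hceil : ⌈U⌉₊ ≤ 4 * ⌊m⌋₊ + 6 := by
    rw [Nat.ceil_le]
    push_cast
    linarith [Nat.lt_floor_add_one m]
  rw [Nat.card_Ioo]
  omega

def outageSlice (a b c : ℝ) : Set ℝ :=
  {z | z ∈ Set.Ioc 1 4 ∧ ∃ q : ℤ, q ≠ 0 ∧ |c + a * z * q| < b}

lemma outageSlice_subset_biUnion {a b : ℝ} (ha : 0 < a) (c : ℝ) :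
    outageSlice a b c ⊆ ⋃ n ∈ Finset.Ioo ⌊(|c| - b) / (4 * a)⌋₊ ⌈(|c| + b) / a⌉₊,
      {z : ℝ | |a * n * z - (|c|)| < b} := by
  rintro z ⟨⟨hz₁, hz₄⟩, q, hq, hlt⟩
  have hn : q.natAbs ≠ 0 := Int.natAbs_ne_zero.2 hq
  have hn₁ : (1 : ℝ) ≤ q.natAbs := by exact_mod_cast Nat.one_le_iff_ne_zero.2 hn
  have hclose : |a * q.natAbs * z - (|c|)| < b := by
    have habs : |a * z * q| = a * q.natAbs * z := by
      rw [Nat.cast_natAbs, abs_mul, abs_of_pos (by positivity : 0 < a * z)]; push_cast; ring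
    have h := abs_abs_sub_abs_le_abs_sub c (-(a * z * q))
    rw [abs_neg, sub_neg_eq_add, habs, abs_sub_comm] at h
    exact h.trans_lt hlt
  have hlo : (|c| - b) / (4 * a) < q.natAbs := by
    rw [div_lt_iff₀ (by positivity)]
    nlinarith [abs_lt.1 hclose, mul_le_mul_of_nonneg_left hz₄ (by positivity : 0 ≤ a * q.natAbs)]
  have hhi : (q.natAbs : ℝ) < (|c| + b) / a := by
    rw [lt_div_iff₀ ha]
    nlinarith [abs_lt.1 hclose, mul_lt_mul_of_pos_left hz₁ (by positivity : 0 < a * q.natAbs)]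
  exact Set.mem_biUnion (Finset.mem_Ioo.2 ⟨(Nat.floor_lt' hn).2 hlo, Nat.lt_ceil.2 hhi⟩) hclose

lemma volume_outageSlice_le {a b : ℝ} (ha : 0 < a) (hb : 0 ≤ b) (hba : b ≤ a) (c : ℝ) :
    volume (outageSlice a b c) ≤ ENNReal.ofReal (10 * b / a) := by
  set m := (|c| - b) / (4 * a)
  have hU : (|c| + b) / a ≤ 4 * m + 2 := by
    rw [div_le_iff₀ ha]
    simp only [m]
    field_simp
    linarith
  calc volume (outageSlice a b c)
      ≤ ∑ n ∈ Finset.Ioo ⌊m⌋₊ ⌈(|c| + b) / a⌉₊, volume {z : ℝ | |a * n * z - (|c|)| < b} :=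
        (measure_mono (outageSlice_subset_biUnion ha c)).trans (measure_biUnion_finset_le _ _)
    _ ≤ ∑ _n ∈ Finset.Ioo ⌊m⌋₊ ⌈(|c| + b) / a⌉₊, ENNReal.ofReal (2 * b / (a * (⌊m⌋₊ + 1))) := by
        refine Finset.sum_le_sum fun n hn => ?_
        obtain ⟨hk, -⟩ := Finset.mem_Ioo.1 hn
        have hn : (⌊m⌋₊ + 1 : ℝ) ≤ n := by exact_mod_cast hk
        rw [volume_setOf_abs_mul_sub_lt (mul_pos ha (Nat.cast_pos.2 (Nat.zero_lt_of_lt hk)))]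
        gcongr
    _ ≤ (5 * (⌊m⌋₊ + 1)) • ENNReal.ofReal (2 * b / (a * (⌊m⌋₊ + 1))) := by
        rw [Finset.sum_const]
        exact nsmul_le_nsmul_left bot_le (card_Ioo_floor_ceil_le hU)
    _ = ENNReal.ofReal (10 * b / a) := by
        rw [nsmul_eq_mul, ← ENNReal.ofReal_natCast, ← ENNReal.ofReal_mul (by positivity)]
        congr 1
        push_cast
        field_simp
        ring

lemma prod_le_mul_of_forall_preimage_le {α β : Type*} [MeasurableSpace α] [MeasurableSpace β]
    {μ : Measure α} {ν : Measure β} {S : Set (α × β)} (hS : MeasurableSet S) {s : Set α}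
    (hs : MeasurableSet s) (hSs : S ⊆ Prod.fst ⁻¹' s) {m : ENNReal}
    (h : ∀ x ∈ s, ν (Prod.mk x ⁻¹' S) ≤ m) : μ.prod ν S ≤ μ s * m := by
  calc μ.prod ν S ≤ ∫⁻ x, ν (Prod.mk x ⁻¹' S) ∂μ := Measure.prod_apply_le hS
    _ ≤ ∫⁻ x, s.indicator (fun _ => m) x ∂μ := lintegral_mono fun x => by
        by_cases hx : x ∈ s
        · simpa [hx] using h x hx
        · have : Prod.mk x ⁻¹' S = ∅ := Set.eq_empty_of_forall_notMem fun y hy => hx (hSs hy)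
          simp [hx, this]
    _ = μ s * m := by rw [lintegral_indicator_const hs, mul_comm]

def outageSlab₂ (a₁ a₂ b : ℝ) (q₀ q₁ : ℤ) : Set (ℝ × ℝ × ℝ) :=
  {g | g ∈ Set.Ioc (1 : ℝ) 4 ×ˢ Set.Ioc (1 : ℝ) 4 ×ˢ Set.Ioc (1 : ℝ) 4 ∧
    ∃ q₂ : ℤ, q₂ ≠ 0 ∧ |g.1 * q₀ + a₁ * g.2.1 * q₁ + a₂ * g.2.2 * q₂| < b}

def outageSlab₁ (a₁ b : ℝ) (q₀ : ℤ) : Set (ℝ × ℝ × ℝ) :=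
  {g | g ∈ Set.Ioc (1 : ℝ) 4 ×ˢ Set.Ioc (1 : ℝ) 4 ×ˢ Set.Ioc (1 : ℝ) 4 ∧
    ∃ q₁ : ℤ, q₁ ≠ 0 ∧ |g.1 * q₀ + a₁ * g.2.1 * q₁| < b}

lemma measurableSet_outageSlab₂ (a₁ a₂ b : ℝ) (q₀ q₁ : ℤ) :
    MeasurableSet (outageSlab₂ a₁ a₂ b q₀ q₁) := by
  unfold outageSlab₂; measurability

lemma measurableSet_outageSlab₁ (a₁ b : ℝ) (q₀ : ℤ) : MeasurableSet (outageSlab₁ a₁ b q₀) := by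
  unfold outageSlab₁; measurability

lemma volume_outageSlab₂_le (a₁ : ℝ) {a₂ b : ℝ} (ha₂ : 0 < a₂) (hb : 0 ≤ b) (hba : b ≤ a₂)
    (q₀ q₁ : ℤ) : volume (outageSlab₂ a₁ a₂ b q₀ q₁) ≤ ENNReal.ofReal (90 * b / a₂) := by
  have hS := measurableSet_outageSlab₂ a₁ a₂ b q₀ q₁
  calc volume (outageSlab₂ a₁ a₂ b q₀ q₁)
      ≤ volume (Set.Ioc (1 : ℝ) 4) *
          (volume (Set.Ioc (1 : ℝ) 4) * ENNReal.ofReal (10 * b / a₂)) := by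
        refine prod_le_mul_of_forall_preimage_le hS measurableSet_Ioc (fun g hg => hg.1.1) ?_
        intro x _
        refine prod_le_mul_of_forall_preimage_le (hS.preimage measurable_prodMk_left)
          measurableSet_Ioc (fun g hg => hg.1.2.1) ?_
        intro y _
        refine le_trans (measure_mono ?_) (volume_outageSlice_le ha₂ hb hba (x * q₀ + a₁ * y * q₁))
        exact fun z ⟨hg, hq⟩ => ⟨hg.2.2, hq⟩
    _ = ENNReal.ofReal (90 * b / a₂) := by
        rw [Real.volume_Ioc, ← ENNReal.ofReal_mul (by norm_num), ← ENNReal.ofReal_mul (by norm_num)]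
        congr 1
        ring

lemma volume_outageSlab₁_le {a₁ b : ℝ} (ha₁ : 0 < a₁) (hb : 0 ≤ b) (hba : b ≤ a₁) (q₀ : ℤ) :
    volume (outageSlab₁ a₁ b q₀) ≤ ENNReal.ofReal (90 * b / a₁) := by
  calc volume (outageSlab₁ a₁ b q₀)
      ≤ volume (Set.Ioc (1 : ℝ) 4) *
          (ENNReal.ofReal (10 * b / a₁) * volume (Set.Ioc (1 : ℝ) 4)) := by
        refine prod_le_mul_of_forall_preimage_le (measurableSet_outageSlab₁ a₁ b q₀)
          measurableSet_Ioc (fun g hg => hg.1.1) ?_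
        intro x _
        calc volume (Prod.mk x ⁻¹' outageSlab₁ a₁ b q₀)
            ≤ volume (outageSlice a₁ b (x * q₀) ×ˢ Set.Ioc (1 : ℝ) 4) :=
              measure_mono fun yz ⟨hg, hq⟩ => ⟨⟨hg.2.1, hq⟩, hg.2.2⟩
          _ ≤ _ := by
              rw [Measure.volume_eq_prod, Measure.prod_prod]
              gcongr
              exact volume_outageSlice_le ha₁ hb hba _
    _ = ENNReal.ofReal (90 * b / a₁) := by
        rw [Real.volume_Ioc, ← ENNReal.ofReal_mul (by positivity),
          ← ENNReal.ofReal_mul (by norm_num)]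
        congr 1
        ring

def outageSet (a₁ a₂ b R : ℝ) : Set (ℝ × ℝ × ℝ) :=
  {g | g ∈ Set.Ioc (1 : ℝ) 4 ×ˢ Set.Ioc (1 : ℝ) 4 ×ˢ Set.Ioc (1 : ℝ) 4 ∧
    ∃ q₀ q₁ q₂ : ℤ, ¬(q₀ = 0 ∧ q₁ = 0 ∧ q₂ = 0) ∧
      |(q₀ : ℝ)| ≤ 2 * R ∧ |(q₁ : ℝ)| ≤ 4 * R ∧ |(q₂ : ℝ)| ≤ 2 * R ∧
      |g.1 * q₀ + a₁ * g.2.1 * q₁ + a₂ * g.2.2 * q₂| < b}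

lemma one_lt_abs_mul_intCast {x : ℝ} (hx : 1 < x) {q : ℤ} (hq : q ≠ 0) : 1 < |x * q| := by
  have : (1 : ℝ) ≤ |(q : ℝ)| := by exact_mod_cast Int.one_le_abs hq
  rw [abs_mul, abs_of_pos (by linarith)]
  nlinarith

lemma mem_Icc_neg_floor_of_abs_le {r : ℝ} {q : ℤ} (h : |(q : ℝ)| ≤ r) :
    q ∈ Finset.Icc (-⌊r⌋) ⌊r⌋ :=
  Finset.mem_Icc.2 (abs_le.1 (Int.le_floor.2 (by exact_mod_cast h)))

lemma cast_card_Icc_neg_floor_le {r : ℝ} (hr : 0 ≤ r) :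
    ((Finset.Icc (-⌊r⌋) ⌊r⌋).card : ℝ) ≤ 2 * r + 1 := by
  have h : ((Finset.Icc (-⌊r⌋) ⌊r⌋).card : ℤ) = ⌊r⌋ + 1 - -⌊r⌋ :=
    Int.card_Icc_of_le _ _ (by linarith [Int.floor_nonneg.2 hr])
  have h' : ((Finset.Icc (-⌊r⌋) ⌊r⌋).card : ℝ) = ⌊r⌋ + 1 - -⌊r⌋ := by exact_mod_cast h
  linarith [Int.floor_le r]

lemma outageSet_subset {a₁ a₂ b : ℝ} (R : ℝ) (ha₁ : 1 ≤ a₁) (ha₂ : 1 ≤ a₂) (hb : b ≤ 1) :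
    outageSet a₁ a₂ b R ⊆
      (⋃ p ∈ (Finset.Icc (-⌊2 * R⌋) ⌊2 * R⌋ ×ˢ Finset.Icc (-⌊4 * R⌋) ⌊4 * R⌋).erase (0, 0),
        outageSlab₂ a₁ a₂ b p.1 p.2) ∪
      ⋃ q ∈ (Finset.Icc (-⌊2 * R⌋) ⌊2 * R⌋).erase 0, outageSlab₁ a₁ b q := by
  rintro g ⟨hg, q₀, q₁, q₂, hq, h₀, h₁, -, hlt⟩
  have hx₁ : 1 < a₁ * g.2.1 := by nlinarith [hg.2.1.1]
  have hx₂ : 1 < a₂ * g.2.2 := by nlinarith [hg.2.2.1]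
  by_cases hq₂ : q₂ = 0
  · subst hq₂
    simp only [Int.cast_zero, mul_zero, add_zero] at hlt
    have hq₁ : q₁ ≠ 0 := by
      rintro rfl
      simp only [Int.cast_zero, mul_zero, add_zero] at hlt
      exact (one_lt_abs_mul_intCast hg.1.1 (by simpa using hq)).not_gt (hlt.trans_le hb)
    have hq₀ : q₀ ≠ 0 := by
      rintro rfl
      simp only [Int.cast_zero, mul_zero, zero_add] at hlt
      exact (one_lt_abs_mul_intCast hx₁ hq₁).not_gt (hlt.trans_le hb)
    exact Or.inr (Set.mem_biUnion (Finset.mem_erase.2 ⟨hq₀, mem_Icc_neg_floor_of_abs_le h₀⟩)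
      ⟨hg, q₁, hq₁, hlt⟩)
  · have hq₀₁ : (q₀, q₁) ≠ (0, 0) := by
      rintro ⟨⟩
      simp only [Int.cast_zero, mul_zero, zero_add] at hlt
      exact (one_lt_abs_mul_intCast hx₂ hq₂).not_gt (hlt.trans_le hb)
    exact Or.inl (Set.mem_biUnion (Finset.mem_erase.2 ⟨hq₀₁, Finset.mem_product.2
      ⟨mem_Icc_neg_floor_of_abs_le h₀, mem_Icc_neg_floor_of_abs_le h₁⟩⟩) ⟨hg, q₂, hq₂, hlt⟩)

lemma volume_outageSet_le {a₁ a₂ b R : ℝ} (ha₁ : 1 ≤ a₁) (ha₂ : 1 ≤ a₂) (hb₀ : 0 ≤ b)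
    (hb₁ : b ≤ 1) (hR : 0 ≤ R) :
    volume (outageSet a₁ a₂ b R) ≤
      ENNReal.ofReal ((32 * R ^ 2 + 12 * R) * (90 * b / a₂) + 4 * R * (90 * b / a₁)) := by
  set I₀ := Finset.Icc (-⌊2 * R⌋) ⌊2 * R⌋
  set I₁ := Finset.Icc (-⌊4 * R⌋) ⌊4 * R⌋
  have h0I₀ : (0 : ℤ) ∈ I₀ := mem_Icc_neg_floor_of_abs_le (by simpa using hR)
  have h0I₁ : (0 : ℤ) ∈ I₁ := mem_Icc_neg_floor_of_abs_le (by simpa using hR)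
  have hI₀ := cast_card_Icc_neg_floor_le (by positivity : 0 ≤ 2 * R)
  have hI₁ := cast_card_Icc_neg_floor_le (by positivity : 0 ≤ 4 * R)
  have hT₀ : (((I₀.erase 0).card : ℕ) : ℝ) ≤ 4 * R := by
    rw [Finset.cast_card_erase_of_mem h0I₀]; linarith
  have hT₀₁ : ((((I₀ ×ˢ I₁).erase (0, 0)).card : ℕ) : ℝ) ≤ 32 * R ^ 2 + 12 * R := by
    rw [Finset.cast_card_erase_of_mem (Finset.mem_product.2 ⟨h0I₀, h0I₁⟩), Finset.card_product,
      Nat.cast_mul]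
    nlinarith [mul_le_mul hI₀ hI₁ (by positivity) (by positivity)]
  calc volume (outageSet a₁ a₂ b R)
      ≤ ∑ p ∈ (I₀ ×ˢ I₁).erase (0, 0), volume (outageSlab₂ a₁ a₂ b p.1 p.2) +
          ∑ q ∈ I₀.erase 0, volume (outageSlab₁ a₁ b q) :=
        (measure_mono (outageSet_subset R ha₁ ha₂ hb₁)).trans <| (measure_union_le _ _).trans <|
          add_le_add (measure_biUnion_finset_le _ _) (measure_biUnion_finset_le _ _)
    _ ≤ ((I₀ ×ˢ I₁).erase (0, 0)).card • ENNReal.ofReal (90 * b / a₂) +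
          (I₀.erase 0).card • ENNReal.ofReal (90 * b / a₁) :=
        add_le_add
          (Finset.sum_le_card_nsmul _ _ _ fun p _ =>
            volume_outageSlab₂_le a₁ (by linarith) hb₀ (by linarith) p.1 p.2)
          (Finset.sum_le_card_nsmul _ _ _ fun q _ =>
            volume_outageSlab₁_le (by linarith) hb₀ (by linarith) q)
    _ = ENNReal.ofReal (((I₀ ×ˢ I₁).erase (0, 0)).card * (90 * b / a₂) +
          (I₀.erase 0).card * (90 * b / a₁)) := by
        rw [nsmul_eq_mul, nsmul_eq_mul, ← ENNReal.ofReal_natCast, ← ENNReal.ofReal_natCast,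
          ← ENNReal.ofReal_mul (by positivity), ← ENNReal.ofReal_mul (by positivity),
          ← ENNReal.ofReal_add (by positivity) (by positivity)]
    _ ≤ _ := by
        have : 0 ≤ 90 * b / a₂ := by positivity
        have : 0 ≤ 90 * b / a₁ := by positivity
        gcongr

lemma outage_exponent_bound {α δ ε P : ℝ} (hα : 3 / 4 ≤ α) (hδ : 0 ≤ δ) (hε : 0 ≤ ε)
    (hP : 1 ≤ P) :
    (32 * (P ^ ((α / 3 - ε) / 2)) ^ 2 + 12 * P ^ ((α / 3 - ε) / 2)) *
        (90 * (δ * P ^ (-(8 * α / 3 - 2) / 2)) / P ^ (1 - α)) +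
      4 * P ^ ((α / 3 - ε) / 2) * (90 * (δ * P ^ (-(8 * α / 3 - 2) / 2)) / P ^ ((1 - α) / 2)) ≤
      129024 * δ * P ^ (-ε / 2) := by
  have hP₀ : 0 < P := by linarith
  have mono : ∀ x ≤ -ε / 2, P ^ x ≤ P ^ (-ε / 2) := fun x hx => rpow_le_rpow_of_exponent_le hP hx
  have e₁ : (P ^ ((α / 3 - ε) / 2)) ^ 2 * P ^ (-(8 * α / 3 - 2) / 2) / P ^ (1 - α) = P ^ (-ε) := by
    rw [sq, ← rpow_add hP₀, ← rpow_add hP₀, ← rpow_sub hP₀]; ring_nf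
  have e₂ : P ^ ((α / 3 - ε) / 2) * P ^ (-(8 * α / 3 - 2) / 2) / P ^ (1 - α) =
      P ^ (-α / 6 - ε / 2) := by
    rw [← rpow_add hP₀, ← rpow_sub hP₀]; ring_nf
  have e₃ : P ^ ((α / 3 - ε) / 2) * P ^ (-(8 * α / 3 - 2) / 2) / P ^ ((1 - α) / 2) =
      P ^ (1 / 2 - 2 * α / 3 - ε / 2) := by
    rw [← rpow_add hP₀, ← rpow_sub hP₀]; ring_nf
  calc _ = 90 * δ * (32 * ((P ^ ((α / 3 - ε) / 2)) ^ 2 * P ^ (-(8 * α / 3 - 2) / 2) / P ^ (1 - α))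
          + 12 * (P ^ ((α / 3 - ε) / 2) * P ^ (-(8 * α / 3 - 2) / 2) / P ^ (1 - α))
          + 4 * (P ^ ((α / 3 - ε) / 2) * P ^ (-(8 * α / 3 - 2) / 2) / P ^ ((1 - α) / 2))) := by
        ring
    _ ≤ 90 * δ * (32 * P ^ (-ε / 2) + 12 * P ^ (-ε / 2) + 4 * P ^ (-ε / 2)) := by
        rw [e₁, e₂, e₃]
        gcongr 90 * δ * (32 * ?_ + 12 * ?_ + 4 * ?_) <;> apply mono <;> linarith
    _ ≤ 129024 * δ * P ^ (-ε / 2) := by nlinarith [rpow_nonneg hP₀.le (-ε / 2)]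

theorem outage_set_measure_regime_three_fourths_one_general
    (α δ ε P : ℝ)
    (hα : α ∈ Set.Icc (3 / 4 : ℝ) 1) (hδ : δ ∈ Set.Ioc (0 : ℝ) 1) (hε : 0 < ε)
    (hP : 1 ≤ P) :
    volume {g : ℝ × ℝ × ℝ |
        g ∈ (Set.Ioc (1 : ℝ) 4) ×ˢ (Set.Ioc (1 : ℝ) 4) ×ˢ (Set.Ioc (1 : ℝ) 4) ∧
        ∃ q₀ q₁ q₂ : ℤ, ¬(q₀ = 0 ∧ q₁ = 0 ∧ q₂ = 0) ∧
          |(q₀ : ℝ)| ≤ 2 * P ^ ((α / 3 - ε) / 2) ∧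
          |(q₁ : ℝ)| ≤ 4 * P ^ ((α / 3 - ε) / 2) ∧
          |(q₂ : ℝ)| ≤ 2 * P ^ ((α / 3 - ε) / 2) ∧
          |g.1 * (q₀ : ℝ) + P ^ ((1 - α) / 2) * g.2.1 * (q₁ : ℝ)
              + P ^ (1 - α) * g.2.2 * (q₂ : ℝ)|
            < δ * P ^ (-(8 * α / 3 - 2) / 2)}
      ≤ ENNReal.ofReal (129024 * δ * P ^ (-ε / 2)) := by
  obtain ⟨hα₀, hα₁⟩ := hα
  obtain ⟨hδ₀, hδ₁⟩ := hδ
  have hβ : δ * P ^ (-(8 * α / 3 - 2) / 2) ≤ 1 :=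
    mul_le_one₀ hδ₁ (by positivity) (rpow_le_one_of_one_le_of_nonpos hP (by linarith))
  calc _ = volume (outageSet (P ^ ((1 - α) / 2)) (P ^ (1 - α)) (δ * P ^ (-(8 * α / 3 - 2) / 2))
          (P ^ ((α / 3 - ε) / 2))) := rfl
    _ ≤ _ := volume_outageSet_le (one_le_rpow hP (by linarith)) (one_le_rpow hP (by linarith))
          (by positivity) hβ (by positivity)
    _ ≤ _ := ENNReal.ofReal_le_ofReal (outage_exponent_bound hα₀ hδ₀.le hε.le hP)

/-- The Lebesgue measure of the outage set `B ⊆ (1,4]³` of triples admitting a small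
nontrivial integer combination is at most `129024·δ·P^{-ε/2}` (regime `3/4 ≤ α ≤ 1`). -/
theorem outage_set_measure_regime_three_fourths_one
    (α δ ε P : ℝ)
    (hα : α ∈ Set.Icc (3 / 4 : ℝ) 1) (hδ : δ ∈ Set.Ioc (0 : ℝ) 1) (hε : 0 < ε)
    (hP : 1 ≤ P)
    (hA₁ : ∃ n : ℕ, 0 < n ∧ P ^ ((1 - α) / 2) = (n : ℝ))
    (hA₂ : ∃ n : ℕ, 0 < n ∧ P ^ (1 - α) = (n : ℝ)) :
    volume {g : ℝ × ℝ × ℝ |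
        g ∈ (Set.Ioc (1 : ℝ) 4) ×ˢ (Set.Ioc (1 : ℝ) 4) ×ˢ (Set.Ioc (1 : ℝ) 4) ∧
        ∃ q₀ q₁ q₂ : ℤ, ¬(q₀ = 0 ∧ q₁ = 0 ∧ q₂ = 0) ∧
          |(q₀ : ℝ)| ≤ 2 * P ^ ((α / 3 - ε) / 2) ∧
          |(q₁ : ℝ)| ≤ 4 * P ^ ((α / 3 - ε) / 2) ∧
          |(q₂ : ℝ)| ≤ 2 * P ^ ((α / 3 - ε) / 2) ∧
          |g.1 * (q₀ : ℝ) + P ^ ((1 - α) / 2) * g.2.1 * (q₁ : ℝ)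
              + P ^ (1 - α) * g.2.2 * (q₂ : ℝ)|
            < δ * P ^ (-(8 * α / 3 - 2) / 2)}
      ≤ ENNReal.ofReal (129024 * δ * P ^ (-ε / 2)) :=
  outage_set_measure_regime_three_fourths_one_general α δ ε P hα hδ hε hP
end

section
/- For every Borel set B ⊆ ℝ³, the four-dimensional Lebesgue measure of the set { (h₁₁, h₁₂, h₂₁, h₂₂) ∈ (1,2]⁴ : (h₁₂h₂₁, h₁₂h₁₁, h₁₁h₂₂) ∈ B } is at most 2 times the three-dimensional Lebesgue measure of B. -/
open MeasureTheory Set ENNReal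

/-!
Fix `h₁₁ = a`. Then `(h₁₂, h₂₁, h₂₂) ↦ (h₁₂h₂₁, h₁₂a, ah₂₂)` has Jacobian `h₁₂a² ≥ 1`, so it cannot
increase measure. Instead of a change of variables, integrate the coordinates out one at a time
(Tonelli): each one enters only through a dilation `x ↦ cx` with `|c| ≥ 1`, which does not increase a
Lebesgue integral over `ℝ`. Integrating over `h₁₁ ∈ (1,2]` then costs a factor `1 ≤ 2`.
-/

theorem lintegral_comp_mul_left_le {c : ℝ} (hc : 1 ≤ |c|) (f : ℝ → ℝ≥0∞) :
    ∫⁻ x, f (c * x) ≤ ∫⁻ x, f x := by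
  have hc₀ : c ≠ 0 := abs_pos.1 (one_pos.trans_le hc)
  calc ∫⁻ x, f (c * x) = ∫⁻ x, f x ∂Measure.map (c * ·) volume :=
        (lintegral_map_equiv f (Homeomorph.mulLeft₀ c hc₀).toMeasurableEquiv).symm
    _ = ENNReal.ofReal |c|⁻¹ * ∫⁻ x, f x := by
        rw [Real.map_volume_mul_left hc₀, lintegral_smul_measure, abs_inv, smul_eq_mul]
    _ ≤ ∫⁻ x, f x :=
        mul_le_of_le_one_left' (ENNReal.ofReal_le_one.2 (inv_le_one_of_one_le₀ hc))

theorem setLIntegral_comp_mul_mul_mul_le {a : ℝ} (ha : 1 ≤ |a|) {F : ℝ × ℝ × ℝ → ℝ≥0∞}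
    (hF : Measurable F) :
    ∫⁻ q in Ici (1 : ℝ) ×ˢ (univ : Set (ℝ × ℝ)), F (q.1 * q.2.1, q.1 * a, a * q.2.2) ≤
      ∫⁻ p, F p := by
  set H : ℝ → ℝ≥0∞ := fun t ↦ ∫⁻ u, ∫⁻ w, F (u, t, w)
  calc ∫⁻ q in Ici (1 : ℝ) ×ˢ (univ : Set (ℝ × ℝ)), F (q.1 * q.2.1, q.1 * a, a * q.2.2)
      = ∫⁻ y in Ici 1, ∫⁻ z, ∫⁻ w, F (y * z, y * a, a * w) := by
        rw [Measure.volume_eq_prod, setLIntegral_prod _ (by fun_prop), Measure.restrict_univ]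
        refine setLIntegral_congr_fun measurableSet_Ici fun y _ ↦ ?_
        rw [Measure.volume_eq_prod, lintegral_prod _ (by fun_prop)]
    _ ≤ ∫⁻ y in Ici 1, ∫⁻ z, ∫⁻ w, F (y * z, y * a, w) :=
        setLIntegral_mono' measurableSet_Ici fun y _ ↦ lintegral_mono fun z ↦
          lintegral_comp_mul_left_le ha fun w ↦ F (y * z, y * a, w)
    _ ≤ ∫⁻ y in Ici 1, H (y * a) :=
        setLIntegral_mono' measurableSet_Ici fun y hy ↦
          lintegral_comp_mul_left_le ((mem_Ici.1 hy).trans (le_abs_self y))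
            fun u ↦ ∫⁻ w, F (u, y * a, w)
    _ ≤ ∫⁻ y, H (y * a) := setLIntegral_le_lintegral _ _
    _ ≤ ∫⁻ t, H t := by simpa only [mul_comm] using lintegral_comp_mul_left_le ha H
    _ = ∫⁻ p, F p := by
        rw [lintegral_lintegral_swap (by fun_prop), Measure.volume_eq_prod,
          lintegral_prod _ (by fun_prop)]
        refine lintegral_congr fun u ↦ ?_
        rw [Measure.volume_eq_prod, lintegral_prod _ (by fun_prop)]

/-- Pushing a Borel set `B ⊆ ℝ³` back through the map
`(h₁₁,h₁₂,h₂₁,h₂₂) ↦ (h₁₂h₂₁, h₁₂h₁₁, h₁₁h₂₂)` on `(1,2]⁴` at most doubles its measure. -/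
theorem preimage_measure_le_two_mul
    (B : Set (ℝ × ℝ × ℝ)) (hB : MeasurableSet B) :
    volume {h : ℝ × ℝ × ℝ × ℝ |
        h ∈ (Set.Ioc (1 : ℝ) 2) ×ˢ (Set.Ioc (1 : ℝ) 2) ×ˢ (Set.Ioc (1 : ℝ) 2) ×ˢ
              (Set.Ioc (1 : ℝ) 2) ∧
        (h.2.1 * h.2.2.1, h.2.1 * h.1, h.1 * h.2.2.2) ∈ B}
      ≤ 2 * volume B := by
  let G : ℝ × ℝ × ℝ × ℝ → ℝ × ℝ × ℝ := fun h ↦ (h.2.1 * h.2.2.1, h.2.1 * h.1, h.1 * h.2.2.2)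
  have hGB : MeasurableSet (G ⁻¹' B) := (by fun_prop : Measurable G) hB
  calc _ ≤ volume.restrict (Ioc (1 : ℝ) 2 ×ˢ Ici (1 : ℝ) ×ˢ (univ : Set (ℝ × ℝ))) (G ⁻¹' B) := by
        rw [Measure.restrict_apply hGB]
        exact measure_mono fun h hh ↦ ⟨hh.2, hh.1.1, mem_Ici.2 hh.1.2.1.1.le, trivial⟩
    _ = ∫⁻ h in Ioc (1 : ℝ) 2 ×ˢ Ici (1 : ℝ) ×ˢ (univ : Set (ℝ × ℝ)), B.indicator 1 (G h) :=
        (lintegral_indicator_one hGB).symm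
    _ = ∫⁻ a in Ioc (1 : ℝ) 2, ∫⁻ q in Ici (1 : ℝ) ×ˢ (univ : Set (ℝ × ℝ)),
          B.indicator 1 (q.1 * q.2.1, q.1 * a, a * q.2.2) := by
        rw [Measure.volume_eq_prod, setLIntegral_prod _ (by fun_prop)]
    _ ≤ ∫⁻ _ in Ioc (1 : ℝ) 2, volume B :=
        setLIntegral_mono' measurableSet_Ioc fun a ha ↦ by
          simpa only [lintegral_indicator_one hB] using
            setLIntegral_comp_mul_mul_mul_le (ha.1.le.trans (le_abs_self a))
              (measurable_one.indicator hB)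
    _ = volume B := by norm_num [Real.volume_Ioc]
    _ ≤ 2 * volume B := le_mul_of_one_le_left' one_le_two
end
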